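/- In the standing setup: (a) the set {ℓ_{xy} : x,y ∈ V} spans the whole dual space V*; (b) if a ∈ V satisfies ℓ_{ax} = 0 for all x ∈ V, then a = 0; and (c) if a ∈ V satisfies ℓ_{xa} = 0 for all x ∈ V, then a = 0. -/

import Mathlib

open TensorProduct LinearMap

noncomputable section

variable (k V : Type) [Field k] [AddCommGroup V] [Module k V]

/-- `R ⊗ Id` acting on `V ⊗ (V ⊗ V)`. -/
def op12 (R : V ⊗[k] V →ₗ[k] V ⊗[k] V) :
    V ⊗[k] (V ⊗[k] V) →ₗ[k] V ⊗[k] (V ⊗[k] V) :=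
  (TensorProduct.assoc k V V V).toLinearMap ∘ₗ LinearMap.rTensor V R ∘ₗ
    (TensorProduct.assoc k V V V).symm.toLinearMap

/-- `Id ⊗ R` acting on `V ⊗ (V ⊗ V)`. -/
def op23 (R : V ⊗[k] V →ₗ[k] V ⊗[k] V) :
    V ⊗[k] (V ⊗[k] V) →ₗ[k] V ⊗[k] (V ⊗[k] V) :=
  LinearMap.lTensor V R

/-- A Hecke symmetry with parameter `q`: an operator on `V ⊗ V` satisfying the braid
equation and the Hecke relation `(R - q·Id)(R + Id) = 0`, with `q ≠ 0`. -/
def IsHeckeSymmetry (q : k) (R : V ⊗[k] V →ₗ[k] V ⊗[k] V) : Prop :=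
  q ≠ 0 ∧
    op12 k V R ∘ₗ op23 k V R ∘ₗ op12 k V R = op23 k V R ∘ₗ op12 k V R ∘ₗ op23 k V R ∧
    (R - q • LinearMap.id) ∘ₗ (R + LinearMap.id) = 0

/-- `x ⋏ y = ζ(x) ⊗ y - ζ(y) ⊗ x`. -/
def wedge2 (ζ : V ≃ₗ[k] V) (x y : V) : V ⊗[k] V := ζ x ⊗ₜ[k] y - ζ y ⊗ₜ[k] x

/-- `Υ²`, the span of the tensors `x ⋏ y`. -/
def Ups2 (ζ : V ≃ₗ[k] V) : Submodule k (V ⊗[k] V) :=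
  Submodule.span k {w : V ⊗[k] V | ∃ x y : V, w = wedge2 k V ζ x y}

/-- `x ⋏ y ⋏ z`. -/
def wedge3 (ζ : V ≃ₗ[k] V) (x y z : V) : V ⊗[k] (V ⊗[k] V) :=
  ζ (ζ x) ⊗ₜ[k] (ζ y ⊗ₜ[k] z) + ζ (ζ y) ⊗ₜ[k] (ζ z ⊗ₜ[k] x) + ζ (ζ z) ⊗ₜ[k] (ζ x ⊗ₜ[k] y)
    - ζ (ζ x) ⊗ₜ[k] (ζ z ⊗ₜ[k] y) - ζ (ζ y) ⊗ₜ[k] (ζ x ⊗ₜ[k] z) - ζ (ζ z) ⊗ₜ[k] (ζ y ⊗ₜ[k] x)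

/-- `Υ³`, the span of the tensors `x ⋏ y ⋏ z` (which coincides with
`(V ⊗ Υ²) ∩ (Υ² ⊗ V)`). -/
def Ups3 (ζ : V ≃ₗ[k] V) : Submodule k (V ⊗[k] (V ⊗[k] V)) :=
  Submodule.span k {t : V ⊗[k] (V ⊗[k] V) | ∃ x y z : V, t = wedge3 k V ζ x y z}

/-- The bilinear extension `w ↦ x ⋏ w` of the wedge multiplication `V × Υ² → Υ³`:
on elements of `Υ²` it satisfies `x ⋏ (y ⋏ z) = x ⋏ y ⋏ z`. -/
def wedge31 (ζ : V ≃ₗ[k] V) (x : V) : V ⊗[k] V →ₗ[k] V ⊗[k] (V ⊗[k] V) :=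
  TensorProduct.mk k V (V ⊗[k] V) (ζ (ζ x)) +
    (TensorProduct.assoc k V V V).toLinearMap ∘ₗ
      ((TensorProduct.mk k (V ⊗[k] V) V).flip x ∘ₗ
        TensorProduct.map ζ.toLinearMap ζ.toLinearMap) -
    TensorProduct.map ζ.toLinearMap (TensorProduct.mk k V V (ζ x))

/-- The skewsymmetrizer `Y = q·Id - R`. -/
def skewY (q : k) (R : V ⊗[k] V →ₗ[k] V ⊗[k] V) : V ⊗[k] V →ₗ[k] V ⊗[k] V :=
  q • LinearMap.id - R

/-- `R' = (ζ⁻¹ ⊗ ζ⁻¹) ∘ R ∘ (ζ ⊗ ζ)`. -/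
def Rprime (ζ : V ≃ₗ[k] V) (R : V ⊗[k] V →ₗ[k] V ⊗[k] V) :
    V ⊗[k] V →ₗ[k] V ⊗[k] V :=
  TensorProduct.map ζ.symm.toLinearMap ζ.symm.toLinearMap ∘ₗ R ∘ₗ
    TensorProduct.map ζ.toLinearMap ζ.toLinearMap

/-- `ℓ_{xy}(z) = ω̃(x ⋏ Y(ζ(y) ⊗ z))`, where `Ω` is a linear extension of `ω̃` to
`V ⊗ V ⊗ V`. -/
def ell (ζ : V ≃ₗ[k] V) (Y : V ⊗[k] V →ₗ[k] V ⊗[k] V)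
    (Ω : V ⊗[k] (V ⊗[k] V) →ₗ[k] k) (x y : V) : Module.Dual k V :=
  Ω ∘ₗ wedge31 k V ζ x ∘ₗ Y ∘ₗ TensorProduct.mk k V V (ζ y)

/-- The linear forms `ℓ_{xy}` associated with the Hecke symmetry `R`. -/
def ellF (ζ : V ≃ₗ[k] V) (q : k) (R : V ⊗[k] V →ₗ[k] V ⊗[k] V)
    (Ω : V ⊗[k] (V ⊗[k] V) →ₗ[k] k) (x y : V) : Module.Dual k V :=
  ell k V ζ (skewY k V q R) Ω x y

/-- The linear forms `ℓ'_{xy}` associated with the twisted Hecke symmetry `R'`. -/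
def ellF' (ζ : V ≃ₗ[k] V) (q : k) (R : V ⊗[k] V →ₗ[k] V ⊗[k] V)
    (Ω : V ⊗[k] (V ⊗[k] V) →ₗ[k] k) (x y : V) : Module.Dual k V :=
  ell k V ζ (skewY k V q (Rprime k V ζ R)) Ω x y

-- test chunk 1
variable {k V} in
lemma wedge31_wedge2 (ζ : V ≃ₗ[k] V) (x y z : V) :
    wedge31 k V ζ x (wedge2 k V ζ y z) = wedge3 k V ζ x y z := by
  simp only [wedge31, wedge2, wedge3, LinearMap.add_apply, LinearMap.sub_apply,
    LinearMap.comp_apply, map_sub, TensorProduct.map_tmul, TensorProduct.mk_apply,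
    LinearMap.flip_apply, TensorProduct.assoc_tmul, LinearEquiv.coe_coe,
    TensorProduct.tmul_sub, TensorProduct.sub_tmul]
  abel
variable {k V} in
/-- `wedge2` as a bilinear map. -/
def Wb (ζ : V ≃ₗ[k] V) : V →ₗ[k] V →ₗ[k] V ⊗[k] V :=
  LinearMap.mk₂ k (fun x y => wedge2 k V ζ x y)
    (fun x x' y => by simp [wedge2, TensorProduct.add_tmul, TensorProduct.tmul_add]; abel)
    (fun c x y => by simp [wedge2, TensorProduct.smul_tmul', TensorProduct.tmul_smul, smul_sub])
    (fun x y y' => by simp [wedge2, TensorProduct.add_tmul, TensorProduct.tmul_add]; abel)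
    (fun c x y => by simp [wedge2, TensorProduct.smul_tmul', TensorProduct.tmul_smul, smul_sub])

variable {k V} in
lemma Wb_apply (ζ : V ≃ₗ[k] V) (x y : V) : Wb ζ x y = wedge2 k V ζ x y := rfl

variable {k V} in
lemma ups2_le_span (ζ : V ≃ₗ[k] V) (b : Module.Basis (Fin 3) k V) :
    Ups2 k V ζ ≤ Submodule.span k
      (Set.range fun p : Fin 3 × Fin 3 => Wb ζ (b p.1) (b p.2)) := by
  rw [Ups2, Submodule.span_le]
  rintro w ⟨x, y, rfl⟩
  rw [← Wb_apply, ← b.sum_repr x, ← b.sum_repr y, map_sum]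
  refine Submodule.sum_mem _ fun j _ => ?_
  rw [map_smul, map_sum, LinearMap.sum_apply]
  refine Submodule.smul_mem _ _ (Submodule.sum_mem _ fun i _ => ?_)
  rw [map_smul, LinearMap.smul_apply]
  exact Submodule.smul_mem _ _ (Submodule.subset_span ⟨(i, j), rfl⟩)
section omegaFacts
variable {k V}
variable (ω : AlternatingMap k V k (Fin 3))

lemma om_swap01 (x y z : V) : ω ![y, x, z] = - ω ![x, y, z] := by
  have := ω.map_swap ![x, y, z] (show (0 : Fin 3) ≠ 1 by decide)
  have hv : ![x, y, z] ∘ Equiv.swap (0 : Fin 3) 1 = ![y, x, z] := by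
    funext i; fin_cases i <;> simp [Equiv.swap_apply_def]
  rwa [hv] at this

lemma om_swap12 (x y z : V) : ω ![x, z, y] = - ω ![x, y, z] := by
  have := ω.map_swap ![x, y, z] (show (1 : Fin 3) ≠ 2 by decide)
  have hv : ![x, y, z] ∘ Equiv.swap (1 : Fin 3) 2 = ![x, z, y] := by
    funext i; fin_cases i <;> simp [Equiv.swap_apply_def]
  rwa [hv] at this

lemma om_swap02 (x y z : V) : ω ![z, y, x] = - ω ![x, y, z] := by
  have := ω.map_swap ![x, y, z] (show (0 : Fin 3) ≠ 2 by decide)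
  have hv : ![x, y, z] ∘ Equiv.swap (0 : Fin 3) 2 = ![z, y, x] := by
    funext i; fin_cases i <;> simp [Equiv.swap_apply_def]
  rwa [hv] at this

lemma om_eq01 (x z : V) : ω ![x, x, z] = 0 :=
  ω.map_eq_zero_of_eq _ (show ![x, x, z] 0 = ![x, x, z] 1 by rfl) (by decide)

lemma om_eq12 (x z : V) : ω ![z, x, x] = 0 :=
  ω.map_eq_zero_of_eq _ (show ![z, x, x] 1 = ![z, x, x] 2 by rfl) (by decide)

lemma om_eq02 (x z : V) : ω ![x, z, x] = 0 :=
  ω.map_eq_zero_of_eq _ (show ![x, z, x] 0 = ![x, z, x] 2 by rfl) (by decide)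

end omegaFacts
variable {k V} in
lemma pair_nondeg (ζ : V ≃ₗ[k] V) (b : Module.Basis (Fin 3) k V)
    (ω : AlternatingMap k V k (Fin 3)) (Ω : V ⊗[k] (V ⊗[k] V) →ₗ[k] k)
    (hΩ : ∀ x y z : V, Ω (wedge3 k V ζ x y z) = ω ![x, y, z])
    (hcv : ω ![b 0, b 1, b 2] ≠ 0)
    (w : V ⊗[k] V) (hw : w ∈ Ups2 k V ζ)
    (h : ∀ x : V, Ω (wedge31 k V ζ x w) = 0) : w = 0 := by
  obtain ⟨c, hrep⟩ := (Submodule.mem_span_range_iff_exists_fun k).mp (ups2_le_span ζ b hw)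
  set cv := ω ![b 0, b 1, b 2] with hcvdef
  have h021 : ω ![b 0, b 2, b 1] = -cv := om_swap12 ω _ _ _
  have h102 : ω ![b 1, b 0, b 2] = -cv := om_swap01 ω _ _ _
  have h210 : ω ![b 2, b 1, b 0] = -cv := om_swap02 ω _ _ _
  have h120 : ω ![b 1, b 2, b 0] = cv := by
    rw [om_swap01 ω (b 2) (b 1) (b 0), h210, neg_neg]
  have h201 : ω ![b 2, b 0, b 1] = cv := by
    rw [om_swap01 ω (b 0) (b 2) (b 1), h021, neg_neg]
  have key : ∀ kk : Fin 3, ∑ p : Fin 3 × Fin 3, c p * ω ![b kk, b p.1, b p.2] = 0 := by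
    intro kk
    have hk := h (b kk)
    rw [← hrep, map_sum, map_sum] at hk
    simpa only [map_smul, Wb_apply, wedge31_wedge2, hΩ, smul_eq_mul] using hk
  have key0 := key 0
  have key1 := key 1
  have key2 := key 2
  simp only [Fintype.sum_prod_type, Fin.sum_univ_three, om_eq01 ω, om_eq12 ω, om_eq02 ω,
    h021, h102, h210, h120, h201, ← hcvdef, mul_zero, add_zero, zero_add] at key0 key1 key2
  have e0 : c (1, 2) = c (2, 1) := by
    have h' : (c (1, 2) - c (2, 1)) * cv = 0 := by ring_nf; linear_combination key0
    rcases mul_eq_zero.mp h' with h'' | h''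
    · exact sub_eq_zero.mp h''
    · exact absurd h'' hcv
  have e1 : c (2, 0) = c (0, 2) := by
    have h' : (c (2, 0) - c (0, 2)) * cv = 0 := by ring_nf; linear_combination key1
    rcases mul_eq_zero.mp h' with h'' | h''
    · exact sub_eq_zero.mp h''
    · exact absurd h'' hcv
  have e2 : c (0, 1) = c (1, 0) := by
    have h' : (c (0, 1) - c (1, 0)) * cv = 0 := by ring_nf; linear_combination key2
    rcases mul_eq_zero.mp h' with h'' | h''
    · exact sub_eq_zero.mp h''
    · exact absurd h'' hcv
  have a00 : Wb ζ (b 0) (b 0) = 0 := sub_self _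
  have a11 : Wb ζ (b 1) (b 1) = 0 := sub_self _
  have a22 : Wb ζ (b 2) (b 2) = 0 := sub_self _
  have a10 : Wb ζ (b 1) (b 0) = - Wb ζ (b 0) (b 1) := (neg_sub _ _).symm
  have a20 : Wb ζ (b 2) (b 0) = - Wb ζ (b 0) (b 2) := (neg_sub _ _).symm
  have a21 : Wb ζ (b 2) (b 1) = - Wb ζ (b 1) (b 2) := (neg_sub _ _).symm
  rw [← hrep]
  simp only [Fintype.sum_prod_type, Fin.sum_univ_three, a00, a11, a22, a10, a20, a21,
    smul_zero, add_zero, zero_add, smul_neg, e0, e1, e2]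
  abel
variable {k V} in
lemma tmul_left_cancel {N : Type} [AddCommGroup N] [Module k N] {u : V} (hu : u ≠ 0)
    {m : N} (h : u ⊗ₜ[k] m = 0) : m = 0 := by
  have : ¬ ∀ φ : Module.Dual k V, φ u = 0 := fun hall =>
    hu ((Module.forall_dual_apply_eq_zero_iff k u).mp hall)
  push_neg at this
  obtain ⟨φ, hφ⟩ := this
  have hF := congrArg (fun t => TensorProduct.lid k N (LinearMap.rTensor N φ t)) h
  simp only [LinearMap.rTensor_tmul, TensorProduct.lid_tmul, map_zero] at hF
  exact (smul_eq_zero.mp hF).resolve_left hφ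

variable {k V} in
lemma tmul_right_cancel {N : Type} [AddCommGroup N] [Module k N] {u : V} (hu : u ≠ 0)
    {m : N} (h : m ⊗ₜ[k] u = 0) : m = 0 := by
  have : ¬ ∀ φ : Module.Dual k V, φ u = 0 := fun hall =>
    hu ((Module.forall_dual_apply_eq_zero_iff k u).mp hall)
  push_neg at this
  obtain ⟨φ, hφ⟩ := this
  have hF := congrArg (fun t => TensorProduct.rid k N (LinearMap.lTensor N φ t)) h
  simp only [LinearMap.lTensor_tmul, TensorProduct.rid_tmul, map_zero] at hF
  exact (smul_eq_zero.mp hF).resolve_left hφ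

variable {k V} in
lemma hecke_sq {q : k} {R : V ⊗[k] V →ₗ[k] V ⊗[k] V}
    (hh : (R - q • LinearMap.id) ∘ₗ (R + LinearMap.id) = 0) (t : V ⊗[k] V) :
    R (R t) = q • t + q • R t - R t := by
  have := LinearMap.ext_iff.mp hh t
  simp only [LinearMap.comp_apply, LinearMap.add_apply, LinearMap.sub_apply,
    LinearMap.smul_apply, LinearMap.id_apply, LinearMap.zero_apply, map_add] at this
  linear_combination (norm := module) this

variable {k V} in
lemma crux_left {q : k} {R : V ⊗[k] V →ₗ[k] V ⊗[k] V} (hR : IsHeckeSymmetry k V q R)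
    {u : V} (hu : u ≠ 0) (h : ∀ z : V, skewY k V q R (u ⊗ₜ[k] z) = 0) :
    R = q • LinearMap.id := by
  obtain ⟨hq, hbraid, hhecke⟩ := hR
  have hRu : ∀ z : V, R (u ⊗ₜ[k] z) = q • (u ⊗ₜ[k] z) := by
    intro z
    have := h z
    simp only [skewY, LinearMap.sub_apply, LinearMap.smul_apply, LinearMap.id_apply] at this
    linear_combination (norm := module) -this
  have fact1 : ∀ t : V ⊗[k] V, op12 k V R (u ⊗ₜ[k] t) = q • (u ⊗ₜ[k] t) := by
    intro t
    induction t using TensorProduct.induction_on with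
    | zero => simp [TensorProduct.tmul_zero]
    | tmul z v =>
        simp only [op12, LinearMap.comp_apply, LinearEquiv.coe_coe,
          TensorProduct.assoc_symm_tmul, LinearMap.rTensor_tmul, hRu,
          TensorProduct.smul_tmul', map_smul, TensorProduct.assoc_tmul]
    | add a b ha hb => rw [TensorProduct.tmul_add, map_add, ha, hb, smul_add]
  have fact2 : ∀ t : V ⊗[k] V, op23 k V R (u ⊗ₜ[k] t) = u ⊗ₜ[k] (R t) := by
    intro t; simp [op23]
  have main : ∀ t : V ⊗[k] V, R t = q • t := by
    intro t
    have hb := LinearMap.ext_iff.mp hbraid (u ⊗ₜ[k] t)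
    simp only [LinearMap.comp_apply, fact1, fact2, map_smul, TensorProduct.tmul_smul] at hb
    -- hb : q • q • (u ⊗ₜ R t) = q • (u ⊗ₜ R (R t))
    have hz : u ⊗ₜ[k] ((q * q) • R t - q • R (R t)) = 0 := by
      rw [TensorProduct.tmul_sub, TensorProduct.tmul_smul, TensorProduct.tmul_smul,
        sub_eq_zero, ← smul_smul]
      exact hb
    have hm := tmul_left_cancel hu hz
    rw [hecke_sq hhecke t] at hm
    have hq2 : q • (R t - q • t) = 0 := by linear_combination (norm := module) hm
    have := smul_eq_zero.mp hq2
    rcases this with h' | h'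
    · exact absurd h' hq
    · linear_combination (norm := module) h'
  ext t
  simp [main]
variable {k V} in
lemma crux_right {q : k} {R : V ⊗[k] V →ₗ[k] V ⊗[k] V} (hR : IsHeckeSymmetry k V q R)
    {u : V} (hu : u ≠ 0) (h : ∀ z : V, skewY k V q R (z ⊗ₜ[k] u) = 0) :
    R = q • LinearMap.id := by
  obtain ⟨hq, hbraid, hhecke⟩ := hR
  have hRu : ∀ z : V, R (z ⊗ₜ[k] u) = q • (z ⊗ₜ[k] u) := by
    intro z
    have := h z
    simp only [skewY, LinearMap.sub_apply, LinearMap.smul_apply, LinearMap.id_apply] at this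
    linear_combination (norm := module) -this
  set A := (TensorProduct.assoc k V V V).toLinearMap with hA
  have factA : ∀ t : V ⊗[k] V, op23 k V R (A (t ⊗ₜ[k] u)) = q • A (t ⊗ₜ[k] u) := by
    intro t
    induction t using TensorProduct.induction_on with
    | zero => simp
    | tmul z v =>
        simp only [hA, LinearEquiv.coe_coe, TensorProduct.assoc_tmul, op23,
          LinearMap.lTensor_tmul, hRu, TensorProduct.tmul_smul]
    | add a b ha hb => rw [TensorProduct.add_tmul, map_add, map_add, ha, hb, smul_add]
  have factB : ∀ t : V ⊗[k] V, op12 k V R (A (t ⊗ₜ[k] u)) = A (R t ⊗ₜ[k] u) := by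
    intro t
    simp only [op12, LinearMap.comp_apply, hA, LinearEquiv.coe_coe]
    rw [LinearEquiv.symm_apply_apply, LinearMap.rTensor_tmul]
  have main : ∀ t : V ⊗[k] V, R t = q • t := by
    intro t
    have hb := LinearMap.ext_iff.mp hbraid (A (t ⊗ₜ[k] u))
    simp only [LinearMap.comp_apply, factA, factB, map_smul] at hb
    -- hb : q • A (R (R t) ⊗ₜ u) = q • q • A (R t ⊗ₜ u)
    have hz : A ((q • R (R t) - (q * q) • R t) ⊗ₜ[k] u) = 0 := by
      rw [TensorProduct.sub_tmul, map_sub, ← TensorProduct.smul_tmul',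
        ← TensorProduct.smul_tmul', map_smul, map_smul, sub_eq_zero, ← smul_smul]
      exact hb
    have hz' : (q • R (R t) - (q * q) • R t) ⊗ₜ[k] u = 0 :=
      (LinearEquiv.map_eq_zero_iff _).mp hz
    have hm := tmul_right_cancel hu hz'
    rw [hecke_sq hhecke t] at hm
    have hq2 : q • (q • t - R t) = 0 := by linear_combination (norm := module) hm
    rcases smul_eq_zero.mp hq2 with h' | h'
    · exact absurd h' hq
    · linear_combination (norm := module) -h'
  ext t
  simp [main]
variable {k V} in
lemma omega_basis_ne (b : Module.Basis (Fin 3) k V) (ω : AlternatingMap k V k (Fin 3))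
    (hω : ω ≠ 0) : ω ![b 0, b 1, b 2] ≠ 0 := by
  intro h
  apply hω
  have hb : ω ⇑b = ω ![b 0, b 1, b 2] := by
    congr 1; funext i; fin_cases i <;> simp
  have := ω.eq_smul_basis_det b
  rw [hb, h, zero_smul] at this
  exact this

variable {k V} in
lemma omega_nondeg (b : Module.Basis (Fin 3) k V) (ω : AlternatingMap k V k (Fin 3))
    (hcv : ω ![b 0, b 1, b 2] ≠ 0) (a : V) (h : ∀ y z : V, ω ![a, y, z] = 0) :
    a = 0 := by
  set cv := ω ![b 0, b 1, b 2] with hcvdef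
  have h102 : ω ![b 1, b 0, b 2] = -cv := om_swap01 ω _ _ _
  have h201 : ω ![b 2, b 0, b 1] = cv := by
    rw [om_swap01 ω (b 0) (b 2) (b 1), om_swap12 ω (b 0) (b 1) (b 2), neg_neg, hcvdef]
  have curry_eq : ∀ x y z : V, ω ![x, y, z] = ω.curryLeft x ![y, z] := fun _ _ _ => rfl
  have lin : ∀ y z : V, ω ![a, y, z] = ∑ i : Fin 3, b.repr a i • ω ![b i, y, z] := by
    intro y z
    let ev : AlternatingMap k V k (Fin 2) →ₗ[k] k :=
      { toFun := fun f => f ![y, z]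
        map_add' := fun f g => rfl
        map_smul' := fun c f => rfl }
    have hF : ∀ x : V, ω ![x, y, z] = (ev ∘ₗ ω.curryLeft) x := fun x => rfl
    rw [hF]
    conv_lhs => rw [← b.sum_repr a]
    rw [map_sum]
    simp only [map_smul, hF]
  have r0 : b.repr a 0 = 0 := by
    have h' := h (b 1) (b 2)
    rw [lin] at h'
    simp only [Fin.sum_univ_three, om_eq01 ω, om_eq02 ω, om_eq12 ω, ← hcvdef,
      smul_eq_mul, mul_zero, add_zero, zero_add] at h'
    exact (mul_eq_zero.mp h').resolve_right hcv
  have r1 : b.repr a 1 = 0 := by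
    have h' := h (b 0) (b 2)
    rw [lin] at h'
    simp only [Fin.sum_univ_three, om_eq01 ω, om_eq02 ω, om_eq12 ω, h102,
      smul_eq_mul, mul_zero, add_zero, zero_add, mul_neg] at h'
    have h'' : b.repr a 1 * cv = 0 := by linear_combination -h'
    exact (mul_eq_zero.mp h'').resolve_right hcv
  have r2 : b.repr a 2 = 0 := by
    have h' := h (b 0) (b 1)
    rw [lin] at h'
    simp only [Fin.sum_univ_three, om_eq01 ω, om_eq02 ω, om_eq12 ω, h201,
      smul_eq_mul, mul_zero, add_zero, zero_add] at h'
    exact (mul_eq_zero.mp h').resolve_right hcv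
  have : b.repr a = 0 := by
    ext i
    fin_cases i
    · exact r0
    · exact r1
    · exact r2
  simpa using congrArg b.repr.symm this

variable {k V} in
lemma wedge2_b01_ne (ζ : V ≃ₗ[k] V) (b : Module.Basis (Fin 3) k V) :
    wedge2 k V ζ (b 0) (b 1) ≠ 0 := by
  intro h
  set b' := b.map ζ with hb'
  have hw : wedge2 k V ζ (b 0) (b 1) = b' 0 ⊗ₜ[k] b 1 - b' 1 ⊗ₜ[k] b 0 := by
    simp [wedge2, hb', Module.Basis.map_apply]
  rw [hw] at h
  have := congrArg (fun t => ((b'.tensorProduct b).repr t) (0, 1)) h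
  simp only [map_sub, Module.Basis.tensorProduct_repr_tmul_apply, Module.Basis.repr_self,
    Finsupp.single_apply, Finsupp.coe_zero, Pi.zero_apply, Finsupp.coe_sub, Pi.sub_apply] at this
  norm_num at this
theorem stmt5 (hdim : Module.finrank k V = 3) (ζ : V ≃ₗ[k] V) (q : k)
    (R : V ⊗[k] V →ₗ[k] V ⊗[k] V) (hR : IsHeckeSymmetry k V q R)
    (hY : LinearMap.range (skewY k V q R) = Ups2 k V ζ)
    (ω : AlternatingMap k V k (Fin 3)) (hω : ω ≠ 0)
    (Ω : V ⊗[k] (V ⊗[k] V) →ₗ[k] k)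
    (hΩ : ∀ x y z : V, Ω (wedge3 k V ζ x y z) = ω ![x, y, z]) :
    -- (a)
    Submodule.span k {f : Module.Dual k V | ∃ x y : V, f = ellF k V ζ q R Ω x y} = ⊤ ∧
    -- (b)
    (∀ a : V, (∀ x : V, ellF k V ζ q R Ω a x = 0) → a = 0) ∧
    -- (c)
    (∀ a : V, (∀ x : V, ellF k V ζ q R Ω x a = 0) → a = 0) := by
  have hfin : Module.Finite k V := Module.finite_of_finrank_eq_succ hdim
  let b : Module.Basis (Fin 3) k V := Module.finBasisOfFinrankEq k V hdim
  have hcv : ω ![b 0, b 1, b 2] ≠ 0 := omega_basis_ne b ω hω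
  have hRne : R ≠ q • LinearMap.id := by
    intro hRq
    have h0 : skewY k V q R = 0 := by rw [skewY, hRq]; exact sub_self _
    rw [h0, LinearMap.range_zero] at hY
    refine wedge2_b01_ne ζ b ((Submodule.mem_bot k).mp ?_)
    rw [hY]
    exact Submodule.subset_span ⟨_, _, rfl⟩
  have hellval : ∀ x y z : V,
      ellF k V ζ q R Ω x y z = Ω (wedge31 k V ζ x (skewY k V q R (ζ y ⊗ₜ[k] z))) := by
    intro x y z; rfl
  -- part (c)
  have hc : ∀ a : V, (∀ x : V, ellF k V ζ q R Ω x a = 0) → a = 0 := by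
    intro a ha
    by_contra hane
    have hζa : ζ a ≠ 0 := fun h => hane (by simpa using congrArg ζ.symm h)
    refine hRne (crux_left hR hζa fun z => ?_)
    refine pair_nondeg ζ b ω Ω hΩ hcv _ ?_ fun x => ?_
    · rw [← hY]; exact ⟨ζ a ⊗ₜ[k] z, rfl⟩
    · have := congrArg (fun f : Module.Dual k V => f z) (ha x)
      simpa [hellval] using this
  -- part (b)
  have hb : ∀ a : V, (∀ x : V, ellF k V ζ q R Ω a x = 0) → a = 0 := by
    intro a ha
    refine omega_nondeg b ω hcv a fun y z => ?_
    have L0 : ∀ v z' : V, Ω (wedge31 k V ζ a (skewY k V q R (v ⊗ₜ[k] z'))) = 0 := by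
      intro v z'
      have := congrArg (fun f : Module.Dual k V => f z') (ha (ζ.symm v))
      simpa [hellval] using this
    have Lzero : (Ω ∘ₗ wedge31 k V ζ a ∘ₗ skewY k V q R) = 0 := by
      apply TensorProduct.ext'
      intro v z'
      simpa using L0 v z'
    obtain ⟨w, hw⟩ : ∃ w, skewY k V q R w = wedge2 k V ζ y z := by
      have : wedge2 k V ζ y z ∈ LinearMap.range (skewY k V q R) := by
        rw [hY]; exact Submodule.subset_span ⟨_, _, rfl⟩
      exact this
    have : Ω (wedge31 k V ζ a (wedge2 k V ζ y z)) = 0 := by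
      rw [← hw]
      exact LinearMap.ext_iff.mp Lzero w
    rwa [wedge31_wedge2, hΩ] at this
  -- part (a)
  refine ⟨?_, hb, hc⟩
  set S := {f : Module.Dual k V | ∃ x y : V, f = ellF k V ζ q R Ω x y} with hS
  have hco : (Submodule.span k S).dualCoannihilator = ⊥ := by
    rw [Submodule.eq_bot_iff]
    intro z0 hz0
    rw [Submodule.mem_dualCoannihilator] at hz0
    have hall : ∀ x y : V, ellF k V ζ q R Ω x y z0 = 0 := fun x y =>
      hz0 _ (Submodule.subset_span ⟨x, y, rfl⟩)
    by_contra hz0ne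
    refine hRne (crux_right hR hz0ne fun v => ?_)
    have hv : ∀ y : V, skewY k V q R (ζ y ⊗ₜ[k] z0) = 0 := by
      intro y
      refine pair_nondeg ζ b ω Ω hΩ hcv _ ?_ fun x => ?_
      · rw [← hY]; exact ⟨ζ y ⊗ₜ[k] z0, rfl⟩
      · simpa [hellval] using hall x y
    have := hv (ζ.symm v)
    rwa [LinearEquiv.apply_symm_apply] at this
  have hWfd : FiniteDimensional k (Submodule.span k S) := inferInstance
  have := Subspace.dualCoannihilator_dualAnnihilator_eq (W := Submodule.span k S)
  rw [hco, Submodule.dualAnnihilator_bot] at this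
  exact this.symm
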